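/- Let ω > 0 satisfy the no-resonance condition Nω ≠ e^{2(log 2 − γ)} for every natural number N. Then there exists A₀ > 0 such that for every real α₀ with 0 < |α₀| < A₀, the set P(α₀) := {p ∈ S_ℓ(ω) : there exists ξ ∈ ℓ²(ℤ;ℂ), ξ ≠ 0, with ξ = 𝓛(α₀,p)ξ} contains at most one element, and every element of P(α₀) lies in the interior of S_ℓ(ω) := {p ∈ ℂ : Re(p) < 0, Im(p) ∈ [0,ω]}, i.e. has imaginary part in the open interval (0,ω). -/

import Mathlib

open MeasureTheory

/-- `β₀ := (γ - log 2)/(2π) - i/8`, with `γ` the Euler–Mascheroni constant. -/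
noncomputable def beta0 : ℂ :=
  (((Real.eulerMascheroniConstant - Real.log 2) / (2 * Real.pi) : ℝ) : ℂ) - Complex.I / 8

/-- `h(z) := 2πi / (log z + 4πβ₀)`, with the principal branch of the complex logarithm. -/
noncomputable def hfun (z : ℂ) : ℂ :=
  2 * (Real.pi : ℂ) * Complex.I / (Complex.log z + 4 * (Real.pi : ℂ) * beta0)

/-- The set of points `p` in the closed strip `S_ℓ(ω)` at which the homogeneous equation
`ξ = 𝓛(α₀,p)ξ` admits a nontrivial `ℓ²(ℤ;ℂ)` solution. -/
def poleSet (α₀ ω : ℝ) : Set ℂ :=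
  {p : ℂ | p.re < 0 ∧ p.im ∈ Set.Icc 0 ω ∧
    ∃ ξ : ℤ → ℂ, Memℓp ξ 2 ∧ ξ ≠ 0 ∧
      ∀ n : ℤ, ξ n =
        -(α₀ : ℂ) * hfun (p + Complex.I * (ω : ℂ) * (n : ℂ)) * (ξ (n + 1) - ξ (n - 1))}

/-!
The denominators `log (p + iωn) + 4πβ₀` of `h` vanish only at `p + iωn = i y₀`,
`y₀ = e^{2(log 2 - γ)}`. The shifts `p + iωn` are `ω` apart, so for `p` in the strip at most one
index `n₀` has a small denominator, and `y₀ ∉ ωℕ` keeps `i(y₀ - ωn₀)` off the boundary of the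
strip. For small `|α₀|` the coefficients of `𝓛(α₀,p)` are at most `1/4` away from `n₀`, and a
maximum principle forces a nonzero bounded solution of `ξ = 𝓛(α₀,p)ξ` to peak at `n₀`. This
makes the `n₀`-th denominator `O(α₀)`, pinning `p` near `i(y₀ - ωn₀)`. For two such `p, p'` the
normalized solutions differ by `O(α₀ |p - p'|)`, hence their `n₀`-th denominators by
`O(α₀² |p - p'|)`; as `z ↦ log z + 4πβ₀` is bi-Lipschitz near `i y₀`, this forces `p = p'`.
-/

open Complex Real
open scoped ENNReal

noncomputable def y₀ : ℝ := Real.exp (2 * (Real.log 2 - eulerMascheroniConstant))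

lemma y₀_pos : 0 < y₀ := Real.exp_pos _

noncomputable def hden (z : ℂ) : ℂ := log z + 4 * π * beta0

lemma hfun_eq_div_hden (z : ℂ) : hfun z = 2 * π * I / hden z := rfl

lemma hden_I_mul_y₀ : hden (I * y₀) = 0 := by
  rw [hden, log_mul_ofReal _ y₀_pos _ I_ne_zero, log_I, y₀, Real.log_exp, beta0]
  push_cast
  field_simp
  ring

lemma I_mul_y₀_ne_zero : I * (y₀ : ℂ) ≠ 0 := mul_ne_zero I_ne_zero (ofReal_ne_zero.2 y₀_pos.ne')

lemma exp_hden {z : ℂ} (hz : z ≠ 0) : exp (hden z) = z / (I * y₀) := by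
  rw [← sub_zero (hden z), ← hden_I_mul_y₀, hden, hden, add_sub_add_right_eq_sub, Complex.exp_sub,
    exp_log hz, exp_log I_mul_y₀_ne_zero]

lemma Complex.norm_exp_sub_exp_le {a b : ℂ} (ha : ‖a‖ ≤ 1) (hb : ‖b‖ ≤ 1) :
    ‖exp a - exp b‖ ≤ 3 * ‖a - b‖ := by
  refine (convex_closedBall (0 : ℂ) 1).norm_image_sub_le_of_norm_hasDerivWithin_le
    (fun u _ => (hasDerivAt_exp u).hasDerivWithinAt) (fun u hu => ?_)
    (mem_closedBall_zero_iff.2 hb) (mem_closedBall_zero_iff.2 ha)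
  calc ‖exp u‖ = Real.exp u.re := norm_exp u
    _ ≤ Real.exp 1 := Real.exp_le_exp.2 ((re_le_norm u).trans (mem_closedBall_zero_iff.1 hu))
    _ ≤ 3 := Real.exp_one_lt_d9.le.trans (by norm_num)

lemma norm_sub_le_of_norm_hden_le_one {z z' : ℂ} (hz : z ≠ 0) (hz' : z' ≠ 0)
    (h : ‖hden z‖ ≤ 1) (h' : ‖hden z'‖ ≤ 1) : ‖z - z'‖ ≤ 3 * y₀ * ‖hden z - hden z'‖ := by
  have hdiff : z - z' = I * y₀ * (exp (hden z) - exp (hden z')) := by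
    rw [exp_hden hz, exp_hden hz', ← sub_div, mul_div_cancel₀ _ I_mul_y₀_ne_zero]
  rw [hdiff, norm_mul, norm_mul, norm_I, norm_real, Real.norm_of_nonneg y₀_pos.le, one_mul,
    mul_comm 3, mul_assoc]
  exact mul_le_mul_of_nonneg_left (norm_exp_sub_exp_le h h') y₀_pos.le

lemma Complex.norm_log_sub_log_le {s : Set ℂ} (hs : Convex ℝ s) (hslit : s ⊆ slitPlane)
    {m : ℝ} (hm : 0 < m) (hms : ∀ u ∈ s, m ≤ ‖u‖) {z w : ℂ} (hz : z ∈ s) (hw : w ∈ s) :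
    ‖log z - log w‖ ≤ m⁻¹ * ‖z - w‖ :=
  hs.norm_image_sub_le_of_norm_hasDerivWithin_le
    (fun u hu => (hasDerivAt_log (hslit hu)).hasDerivWithinAt)
    (fun u hu => by rw [norm_inv]; exact inv_anti₀ hm (hms u hu)) hw hz

lemma norm_two_pi_I : ‖2 * π * I‖ = 2 * π := by simp [pi_pos.le]

lemma norm_hfun_le {z : ℂ} {c : ℝ} (hc : 0 < c) (h : c ≤ ‖hden z‖) : ‖hfun z‖ ≤ 2 * π / c := by
  rw [hfun_eq_div_hden, norm_div, norm_two_pi_I]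
  exact div_le_div_of_nonneg_left (by positivity) hc h

lemma norm_hfun_sub_hfun_le {z z' : ℂ} {c : ℝ} (hc : 0 < c) (h : c ≤ ‖hden z‖)
    (h' : c ≤ ‖hden z'‖) : ‖hfun z - hfun z'‖ ≤ 2 * π / c ^ 2 * ‖hden z - hden z'‖ := by
  have hz : hden z ≠ 0 := norm_pos_iff.1 (hc.trans_le h)
  have hz' : hden z' ≠ 0 := norm_pos_iff.1 (hc.trans_le h')
  rw [hfun_eq_div_hden, hfun_eq_div_hden, div_eq_mul_inv, div_eq_mul_inv, ← mul_sub, norm_mul,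
    ← dist_eq_norm, dist_inv_inv₀ hz hz', dist_eq_norm, norm_two_pi_I, div_eq_mul_inv,
    mul_comm ‖_‖, ← mul_assoc, div_eq_mul_inv]
  gcongr
  rw [sq]
  exact mul_le_mul h h' hc.le (hc.le.trans h)

def centralDiff (a : ℤ → ℂ) : (ℤ → ℂ) →ₗ[ℂ] ℤ → ℂ where
  toFun ξ n := a n * (ξ (n + 1) - ξ (n - 1))
  map_add' ξ ζ := by ext n; simp only [Pi.add_apply]; ring
  map_smul' c ξ := by ext n; simp only [Pi.smul_apply, smul_eq_mul, RingHom.id_apply]; ring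

lemma centralDiff_apply (a ξ : ℤ → ℂ) (n : ℤ) :
    centralDiff a ξ n = a n * (ξ (n + 1) - ξ (n - 1)) := rfl

lemma norm_centralDiff_apply_le (a ξ : ℤ → ℂ) (n : ℤ) :
    ‖centralDiff a ξ n‖ ≤ ‖a n‖ * (‖ξ (n + 1)‖ + ‖ξ (n - 1)‖) := by
  rw [centralDiff_apply, norm_mul]
  gcongr
  exact norm_sub_le _ _

/-- Maximum principle: comparing `‖ξ n‖` with `M = sup ‖ξ‖` gives `M ≤ max ‖ξ n₀‖ (M / 2 + r)`. -/
theorem norm_le_max_of_eq_centralDiff_add {a f ξ : ℤ → ℂ} {n₀ : ℤ} {r : ℝ} (hξ : Memℓp ξ ∞)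
    (ha : ∀ n ≠ n₀, ‖a n‖ ≤ 1 / 4) (hf : ∀ n ≠ n₀, ‖f n‖ ≤ r)
    (h : ∀ n ≠ n₀, ξ n = centralDiff a ξ n + f n) (n : ℤ) : ‖ξ n‖ ≤ max ‖ξ n₀‖ (2 * r) := by
  have hbdd := memℓp_infty_iff.1 hξ
  set M := ⨆ n, ‖ξ n‖
  have hle : ∀ n, ‖ξ n‖ ≤ M := le_ciSup hbdd
  have hM : M ≤ max ‖ξ n₀‖ (M / 2 + r) := by
    refine ciSup_le fun n => ?_
    rcases eq_or_ne n n₀ with rfl | hn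
    · exact le_max_left _ _
    refine le_max_of_le_right ?_
    calc ‖ξ n‖ ≤ ‖centralDiff a ξ n‖ + ‖f n‖ := h n hn ▸ norm_add_le _ _
      _ ≤ 1 / 4 * (M + M) + r := by
        gcongr
        · exact (norm_centralDiff_apply_le a ξ n).trans (by gcongr; exacts [ha n hn, hle _, hle _])
        · exact hf n hn
      _ = M / 2 + r := by ring
  refine (hle n).trans ?_
  rcases le_max_iff.1 hM with hM | hM
  · exact le_max_of_le_left hM
  · exact le_max_of_le_right (by linarith)

structure IsNormalizedSolution (a : ℤ → ℂ) (n₀ : ℤ) (ζ : ℤ → ℂ) : Prop where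
  centralDiff_eq : centralDiff a ζ = ζ
  apply_n₀ : ζ n₀ = 1
  norm_le_one : ∀ n, ‖ζ n‖ ≤ 1

lemma IsNormalizedSolution.memℓp {a ζ : ℤ → ℂ} {n₀ : ℤ} (hζ : IsNormalizedSolution a n₀ ζ) :
    Memℓp ζ ∞ :=
  memℓp_infty_iff.2 ⟨1, by rintro _ ⟨n, rfl⟩; exact hζ.norm_le_one n⟩

lemma exists_isNormalizedSolution {a ξ : ℤ → ℂ} {n₀ : ℤ} (hξ : Memℓp ξ ∞) (hξ0 : ξ ≠ 0)
    (hfix : centralDiff a ξ = ξ) (ha : ∀ n ≠ n₀, ‖a n‖ ≤ 1 / 4) :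
    ∃ ζ, IsNormalizedSolution a n₀ ζ := by
  have hmax : ∀ n, ‖ξ n‖ ≤ ‖ξ n₀‖ := fun n => by
    simpa using norm_le_max_of_eq_centralDiff_add (f := 0) (r := 0) hξ ha (fun _ _ => by simp)
      (fun n _ => by simp [hfix]) n
  have hn₀ : ξ n₀ ≠ 0 := fun h0 => hξ0 <| funext fun n => norm_le_zero_iff.1 <| by
    simpa [h0] using hmax n
  refine ⟨(ξ n₀)⁻¹ • ξ, ⟨by rw [map_smul, hfix], inv_mul_cancel₀ hn₀, fun n => ?_⟩⟩
  rw [Pi.smul_apply, smul_eq_mul, norm_mul, norm_inv, inv_mul_le_iff₀ (norm_pos_iff.2 hn₀), mul_one]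
  exact hmax n

lemma norm_sub_le_of_isNormalizedSolution {a a' ζ ζ' : ℤ → ℂ} {n₀ : ℤ} {ε : ℝ}
    (hζ : IsNormalizedSolution a n₀ ζ) (hζ' : IsNormalizedSolution a' n₀ ζ')
    (ha : ∀ n ≠ n₀, ‖a n‖ ≤ 1 / 4) (haa' : ∀ n ≠ n₀, ‖a n - a' n‖ ≤ ε) (n : ℤ) :
    ‖ζ n - ζ' n‖ ≤ 4 * ε := by
  have hε : 0 ≤ ε := (norm_nonneg _).trans (haa' (n₀ + 1) (by omega))
  have hforce : ∀ n ≠ n₀, ‖centralDiff (a - a') ζ' n‖ ≤ 2 * ε := fun n hn =>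
    calc ‖centralDiff (a - a') ζ' n‖ ≤ ‖a n - a' n‖ * (‖ζ' (n + 1)‖ + ‖ζ' (n - 1)‖) :=
          norm_centralDiff_apply_le _ _ n
      _ ≤ ε * (1 + 1) := by
          gcongr
          exacts [haa' n hn, hζ'.norm_le_one _, hζ'.norm_le_one _]
      _ = 2 * ε := by ring
  have hsplit : ∀ n, (ζ - ζ') n = centralDiff a (ζ - ζ') n + centralDiff (a - a') ζ' n := by
    intro n
    conv_lhs => rw [← hζ.centralDiff_eq, ← hζ'.centralDiff_eq]
    simp only [Pi.sub_apply, centralDiff_apply]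
    ring
  have := norm_le_max_of_eq_centralDiff_add (hζ.memℓp.sub hζ'.memℓp) ha hforce
    (fun n _ => hsplit n) n
  simpa [hζ.apply_n₀, hζ'.apply_n₀, hε, show 2 * (2 * ε) = 4 * ε by ring] using this

lemma Complex.norm_log_sub_log_le_of_le_im {m : ℝ} (hm : 0 < m) {z w : ℂ} (hz : m ≤ z.im)
    (hw : m ≤ w.im) : ‖log z - log w‖ ≤ m⁻¹ * ‖z - w‖ :=
  norm_log_sub_log_le (convex_halfSpace_im_ge m)
    (fun _ hu => mem_slitPlane_iff.2 (Or.inr (hm.trans_le hu).ne')) hm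
    (fun u hu => (le_abs_self _).trans' hu |>.trans (abs_im_le_norm u)) hz hw

lemma Complex.norm_log_sub_log_le_of_im_le {m : ℝ} (hm : 0 < m) {z w : ℂ} (hz : z.im ≤ -m)
    (hw : w.im ≤ -m) : ‖log z - log w‖ ≤ m⁻¹ * ‖z - w‖ :=
  norm_log_sub_log_le (convex_halfSpace_im_le (-m))
    (fun _ hu => mem_slitPlane_iff.2 (Or.inr (hu.trans_lt (neg_neg_of_pos hm)).ne)) hm
    (fun u hu => (le_neg.1 hu).trans (neg_le_abs _) |>.trans (abs_im_le_norm u)) hz hw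

lemma im_add_I_mul_int (ω : ℝ) (p : ℂ) (m : ℤ) : (p + I * ω * m).im = p.im + ω * m := by simp

lemma re_add_I_mul_int (ω : ℝ) (p : ℂ) (m : ℤ) : (p + I * ω * m).re = p.re := by simp

lemma norm_hden_sub_hden_le {ω η : ℝ} {p p' : ℂ} (hη : 0 < η) (him : p.im ∈ Set.Icc η (ω - η))
    (him' : p'.im ∈ Set.Icc η (ω - η)) (m : ℤ) :
    ‖hden (p + I * ω * m) - hden (p' + I * ω * m)‖ ≤ η⁻¹ * ‖p - p'‖ := by
  rw [hden, hden, add_sub_add_right_eq_sub, ← add_sub_add_right_eq_sub p p' (I * ω * m)]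
  have hω : 0 ≤ ω := by linarith [him.1, him.2]
  rcases le_or_gt 0 m with hm | hm
  · have hωm : 0 ≤ ω * m := mul_nonneg hω (by exact_mod_cast hm)
    exact norm_log_sub_log_le_of_le_im hη (by rw [im_add_I_mul_int]; linarith [him.1])
      (by rw [im_add_I_mul_int]; linarith [him'.1])
  · have hωm : ω * m ≤ -ω := by
      have : (m : ℝ) ≤ -1 := by exact_mod_cast Int.le_sub_one_of_lt hm
      nlinarith
    exact norm_log_sub_log_le_of_im_le hη (by rw [im_add_I_mul_int]; linarith [him.2])
      (by rw [im_add_I_mul_int]; linarith [him'.2])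

lemma exists_int_mul_add_mem_Ioo {ω y : ℝ} (hω : 0 < ω) (hy : 0 ≤ y)
    (h : ∀ N : ℕ, (N : ℝ) * ω ≠ y) : ∃ n₀ : ℤ, ∃ μ ∈ Set.Ioo 0 ω, y = ω * n₀ + μ := by
  refine ⟨⌊y / ω⌋, ω * Int.fract (y / ω), ⟨?_, ?_⟩, ?_⟩
  · refine mul_pos hω ((Int.fract_nonneg _).lt_of_ne' fun h0 => h ⌊y / ω⌋.toNat ?_)
    rw [Int.fract, sub_eq_zero] at h0
    have hN : ((⌊y / ω⌋.toNat : ℕ) : ℝ) = ⌊y / ω⌋ := by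
      exact_mod_cast Int.toNat_of_nonneg (Int.floor_nonneg.2 (div_nonneg hy hω.le))
    rw [hN, ← h0]
    field_simp
  · exact mul_lt_of_lt_one_right hω (Int.fract_lt_one _)
  · rw [← mul_add, Int.floor_add_fract]
    field_simp

/-- Near `i y₀` the shifts `p + iωn` are `ω` apart, so at most one of them is close to it. -/
lemma eq_and_abs_im_sub_lt_of_norm_hden_lt {ω μ η c : ℝ} {n₀ n : ℤ} {p : ℂ}
    (hy : y₀ = ω * n₀ + μ) (hημ : η ≤ μ) (hηω : μ + η ≤ ω) (hc1 : c ≤ 1) (hcη : 3 * y₀ * c ≤ η)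
    (hre : p.re < 0) (him : p.im ∈ Set.Icc 0 ω) (h : ‖hden (p + I * ω * n)‖ < c) :
    n = n₀ ∧ |p.im - μ| < η := by
  have hz : p + I * ω * n ≠ 0 := fun h0 => by
    simp [← re_add_I_mul_int ω p n, h0] at hre
  have hclose : ‖p + I * ω * n - I * y₀‖ < η := by
    calc ‖p + I * ω * n - I * y₀‖ ≤ 3 * y₀ * ‖hden (p + I * ω * n) - hden (I * y₀)‖ :=
          norm_sub_le_of_norm_hden_le_one hz I_mul_y₀_ne_zero (h.le.trans hc1)
            (by simp [hden_I_mul_y₀])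
      _ < 3 * y₀ * c := by rw [hden_I_mul_y₀, sub_zero]; gcongr; exact mul_pos three_pos y₀_pos
      _ ≤ η := hcη
  have him_close : |p.im - μ + ω * (n - n₀)| < η := by
    calc |p.im - μ + ω * (n - n₀)| = |(p + I * ω * n - I * y₀).im| := by
          congr 1; simp [hy]; ring
      _ ≤ ‖p + I * ω * n - I * y₀‖ := abs_im_le_norm _
      _ < η := hclose
  obtain ⟨hlo, hhi⟩ := abs_lt.1 him_close
  have hn : n = n₀ := by
    have h1 : ω * ((n : ℝ) - n₀) < ω * 1 := by linarith [him.1]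
    have h2 : ω * (-1) < ω * ((n : ℝ) - n₀) := by linarith [him.2]
    have h1' := lt_of_mul_lt_mul_left h1 (by linarith [him.1, him.2])
    have h2' := lt_of_mul_lt_mul_left h2 (by linarith [him.1, him.2])
    have : n - n₀ < 1 := by exact_mod_cast h1'
    have : -1 < n - n₀ := by exact_mod_cast h2'
    omega
  subst hn
  exact ⟨rfl, by simpa using him_close⟩

/-- `𝓛(α₀,p) = centralDiff (poleCoeff α₀ ω p)`. -/
noncomputable def poleCoeff (α₀ ω : ℝ) (p : ℂ) (n : ℤ) : ℂ := -(α₀ : ℂ) * hfun (p + I * ω * n)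

lemma norm_poleCoeff_le {α₀ ω c : ℝ} {p : ℂ} {n : ℤ} (hc : 0 < c) (hα : 8 * π * |α₀| ≤ c)
    (h : c ≤ ‖hden (p + I * ω * n)‖) : ‖poleCoeff α₀ ω p n‖ ≤ 1 / 4 := by
  rw [poleCoeff, norm_mul, norm_neg, norm_real, Real.norm_eq_abs]
  calc |α₀| * ‖hfun (p + I * ω * n)‖ ≤ |α₀| * (2 * π / c) := by gcongr; exact norm_hfun_le hc h
    _ ≤ 1 / 4 := by rw [mul_div_assoc', div_le_iff₀ hc]; linarith

lemma norm_poleCoeff_sub_poleCoeff_le {α₀ ω c : ℝ} {p p' : ℂ} {n : ℤ} (hc : 0 < c)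
    (h : c ≤ ‖hden (p + I * ω * n)‖) (h' : c ≤ ‖hden (p' + I * ω * n)‖) :
    ‖poleCoeff α₀ ω p n - poleCoeff α₀ ω p' n‖ ≤
      |α₀| * (2 * π / c ^ 2) * ‖hden (p + I * ω * n) - hden (p' + I * ω * n)‖ := by
  rw [poleCoeff, poleCoeff, ← mul_sub, norm_mul, norm_neg, norm_real, Real.norm_eq_abs]
  exact (mul_le_mul_of_nonneg_left (norm_hfun_sub_hfun_le hc h h') (abs_nonneg _)).trans_eq
    (mul_assoc _ _ _).symm

lemma hden_eq_of_isNormalizedSolution {α₀ ω : ℝ} {p : ℂ} {n₀ : ℤ} {ζ : ℤ → ℂ}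
    (hζ : IsNormalizedSolution (poleCoeff α₀ ω p) n₀ ζ) :
    hden (p + I * ω * n₀) = -(α₀ : ℂ) * (2 * π * I) * (ζ (n₀ + 1) - ζ (n₀ - 1)) := by
  have h := congrFun hζ.centralDiff_eq n₀
  rw [centralDiff_apply, hζ.apply_n₀, poleCoeff, hfun_eq_div_hden] at h
  have hne : hden (p + I * ω * n₀) ≠ 0 := by rintro h0; simp [h0] at h
  field_simp at h
  rw [← h]
  ring

lemma norm_hden_le_of_isNormalizedSolution {α₀ ω : ℝ} {p : ℂ} {n₀ : ℤ} {ζ : ℤ → ℂ}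
    (hζ : IsNormalizedSolution (poleCoeff α₀ ω p) n₀ ζ) :
    ‖hden (p + I * ω * n₀)‖ ≤ 4 * π * |α₀| := by
  rw [hden_eq_of_isNormalizedSolution hζ, norm_mul, norm_mul, norm_neg, norm_real,
    Real.norm_eq_abs, norm_two_pi_I]
  calc |α₀| * (2 * π) * ‖ζ (n₀ + 1) - ζ (n₀ - 1)‖ ≤ |α₀| * (2 * π) * (1 + 1) := by
        gcongr
        exact (norm_sub_le _ _).trans (add_le_add (hζ.norm_le_one _) (hζ.norm_le_one _))
    _ = 4 * π * |α₀| := by ring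

lemma norm_hden_sub_hden_le_of_isNormalizedSolution {α₀ ω δ : ℝ} {p p' : ℂ} {n₀ : ℤ}
    {ζ ζ' : ℤ → ℂ} (hζ : IsNormalizedSolution (poleCoeff α₀ ω p) n₀ ζ)
    (hζ' : IsNormalizedSolution (poleCoeff α₀ ω p') n₀ ζ') (hδ : ∀ n, ‖ζ n - ζ' n‖ ≤ δ) :
    ‖hden (p + I * ω * n₀) - hden (p' + I * ω * n₀)‖ ≤ 4 * π * |α₀| * δ := by
  rw [hden_eq_of_isNormalizedSolution hζ, hden_eq_of_isNormalizedSolution hζ', ← mul_sub,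
    norm_mul, norm_mul, norm_neg, norm_real, Real.norm_eq_abs, norm_two_pi_I, sub_sub_sub_comm]
  calc |α₀| * (2 * π) * ‖ζ (n₀ + 1) - ζ' (n₀ + 1) - (ζ (n₀ - 1) - ζ' (n₀ - 1))‖
      ≤ |α₀| * (2 * π) * (δ + δ) := by
        gcongr
        exact (norm_sub_le _ _).trans (add_le_add (hδ _) (hδ _))
    _ = 4 * π * |α₀| * δ := by ring

lemma exists_isNormalizedSolution_of_mem_poleSet {α₀ ω μ η c : ℝ} {n₀ : ℤ} {p : ℂ}
    (hp : p ∈ poleSet α₀ ω) (hc : 0 < c) (hα : 8 * π * |α₀| ≤ c)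
    (hpin : ∀ n : ℤ, ‖hden (p + I * ω * n)‖ < c → n = n₀ ∧ |p.im - μ| < η) :
    |p.im - μ| < η ∧ (∀ n ≠ n₀, c ≤ ‖hden (p + I * ω * n)‖) ∧
      ∃ ζ, IsNormalizedSolution (poleCoeff α₀ ω p) n₀ ζ := by
  have hoff : ∀ n ≠ n₀, c ≤ ‖hden (p + I * ω * n)‖ := fun n hn =>
    not_lt.1 fun h => hn (hpin n h).1
  obtain ⟨-, -, ξ, hξ, hξ0, hfix⟩ := hp
  obtain ⟨ζ, hζ⟩ := exists_isNormalizedSolution (hξ.of_exponent_ge le_top) hξ0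
    (funext fun n => (hfix n).symm) fun n hn => norm_poleCoeff_le hc hα (hoff n hn)
  refine ⟨(hpin n₀ ?_).2, hoff, ζ, hζ⟩
  linarith [norm_hden_le_of_isNormalizedSolution hζ]

theorem eq_of_isNormalizedSolution {α₀ ω η c : ℝ} {n₀ : ℤ} {p p' : ℂ} {ζ ζ' : ℤ → ℂ}
    (hc : 0 < c) (hc1 : c ≤ 1) (hα : 8 * π * |α₀| ≤ c)
    (hK : 96 * π ^ 2 * y₀ * α₀ ^ 2 < c ^ 2 * η) (hre : p.re < 0) (hre' : p'.re < 0)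
    (him : p.im ∈ Set.Icc η (ω - η)) (him' : p'.im ∈ Set.Icc η (ω - η))
    (hoff : ∀ n ≠ n₀, c ≤ ‖hden (p + I * ω * n)‖) (hoff' : ∀ n ≠ n₀, c ≤ ‖hden (p' + I * ω * n)‖)
    (hζ : IsNormalizedSolution (poleCoeff α₀ ω p) n₀ ζ)
    (hζ' : IsNormalizedSolution (poleCoeff α₀ ω p') n₀ ζ') : p = p' := by
  have hη : 0 < η :=
    pos_of_mul_pos_right (hK.trans_le' (by have := y₀_pos; positivity)) (sq_nonneg c)
  set ε := |α₀| * (2 * π / c ^ 2) * (η⁻¹ * ‖p - p'‖) with hε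
  have hcoef : ∀ n ≠ n₀, ‖poleCoeff α₀ ω p n - poleCoeff α₀ ω p' n‖ ≤ ε := fun n hn =>
    (norm_poleCoeff_sub_poleCoeff_le hc (hoff n hn) (hoff' n hn)).trans
      (mul_le_mul_of_nonneg_left (norm_hden_sub_hden_le hη him him' n) (by positivity))
  have hden_sub := norm_hden_sub_hden_le_of_isNormalizedSolution hζ hζ'
    (norm_sub_le_of_isNormalizedSolution hζ hζ' (fun n hn => norm_poleCoeff_le hc hα (hoff n hn))
      hcoef)
  have hsmall : 4 * π * |α₀| ≤ 1 := by linarith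
  have hlip := norm_sub_le_of_norm_hden_le_one
    (fun h0 => by simp [← re_add_I_mul_int ω p n₀, h0] at hre)
    (fun h0 => by simp [← re_add_I_mul_int ω p' n₀, h0] at hre')
    ((norm_hden_le_of_isNormalizedSolution hζ).trans hsmall)
    ((norm_hden_le_of_isNormalizedSolution hζ').trans hsmall)
  rw [add_sub_add_right_eq_sub] at hlip
  have hcontr : ‖p - p'‖ ≤ 96 * π ^ 2 * y₀ * α₀ ^ 2 / (c ^ 2 * η) * ‖p - p'‖ := by
    calc ‖p - p'‖ ≤ 3 * y₀ * (4 * π * |α₀| * (4 * ε)) :=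
          hlip.trans (by gcongr; have := y₀_pos; positivity)
      _ = _ := by rw [hε, ← sq_abs α₀]; field_simp; ring
  have hK' : 96 * π ^ 2 * y₀ * α₀ ^ 2 / (c ^ 2 * η) < 1 := (div_lt_one (by positivity)).2 hK
  exact sub_eq_zero.1 (norm_le_zero_iff.1 (by nlinarith [norm_nonneg (p - p')]))

lemma abs_le_and_sq_lt_of_abs_lt_min {α₀ c η : ℝ} (hc1 : c ≤ 1)
    (hα : |α₀| < min (c / (8 * π)) (c ^ 2 * η / (96 * π ^ 2 * y₀))) :
    8 * π * |α₀| ≤ c ∧ 96 * π ^ 2 * y₀ * α₀ ^ 2 < c ^ 2 * η := by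
  have h8 := hα.trans_le (min_le_left _ _)
  rw [lt_div_iff₀ (by positivity)] at h8
  have h96 := hα.trans_le (min_le_right _ _)
  rw [lt_div_iff₀ (by have := y₀_pos; positivity)] at h96
  have hsq : α₀ ^ 2 ≤ |α₀| := by
    rw [← sq_abs]
    nlinarith [abs_nonneg α₀, pi_gt_three]
  have := mul_le_mul_of_nonneg_left hsq (by have := y₀_pos; positivity : 0 ≤ 96 * π ^ 2 * y₀)
  constructor <;> linarith

theorem at_most_one_pole_small_alpha (ω : ℝ) (hω : 0 < ω)
    (hnores : ∀ N : ℕ,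
      (N : ℝ) * ω ≠ Real.exp (2 * (Real.log 2 - Real.eulerMascheroniConstant))) :
    ∃ A₀ : ℝ, 0 < A₀ ∧ ∀ α₀ : ℝ, 0 < |α₀| → |α₀| < A₀ →
      (poleSet α₀ ω).Subsingleton ∧
      ∀ p ∈ poleSet α₀ ω, 0 < p.im ∧ p.im < ω := by
  obtain ⟨n₀, μ, ⟨hμ, hμω⟩, hy⟩ := exists_int_mul_add_mem_Ioo hω y₀_pos.le hnores
  set η := min μ (ω - μ) / 2 with hηdef
  have hη : 0 < η := half_pos (lt_min hμ (sub_pos.2 hμω))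
  set c := min 1 (η / (3 * y₀))
  have hc : 0 < c := lt_min one_pos (div_pos hη (mul_pos three_pos y₀_pos))
  have hcη : 3 * y₀ * c ≤ η := (mul_le_mul_of_nonneg_left (min_le_right _ _)
    (mul_pos three_pos y₀_pos).le).trans_eq (mul_div_cancel₀ _ (mul_pos three_pos y₀_pos).ne')
  refine ⟨min (c / (8 * π)) (c ^ 2 * η / (96 * π ^ 2 * y₀)),
    lt_min (by positivity) (div_pos (by positivity) (by have := y₀_pos; positivity)),
    fun α₀ _ hαA => ?_⟩
  obtain ⟨hα, hK⟩ := abs_le_and_sq_lt_of_abs_lt_min (min_le_left _ _) hαA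
  have hpole := fun p (hp : p ∈ poleSet α₀ ω) => exists_isNormalizedSolution_of_mem_poleSet hp hc
    hα fun n => eq_and_abs_im_sub_lt_of_norm_hden_lt hy (by linarith [min_le_left μ (ω - μ)])
      (by linarith [min_le_right μ (ω - μ)]) (min_le_left _ _) hcη hp.1 hp.2.1
  have him : ∀ p ∈ poleSet α₀ ω, p.im ∈ Set.Icc η (ω - η) := fun p hp => by
    have := abs_lt.1 (hpole p hp).1
    constructor <;> linarith [min_le_left μ (ω - μ), min_le_right μ (ω - μ)]
  refine ⟨fun p hp p' hp' => ?_, fun p hp => ⟨hη.trans_le (him p hp).1, by linarith [(him p hp).2]⟩⟩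
  obtain ⟨-, hoff, ζ, hζ⟩ := hpole p hp
  obtain ⟨-, hoff', ζ', hζ'⟩ := hpole p' hp'
  exact eq_of_isNormalizedSolution hc (min_le_left _ _) hα hK hp.1 hp'.1 (him p hp) (him p' hp')
    hoff hoff' hζ hζ'
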